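/- Let μ₂ be a suitable σ-invariant probability on Ω with Hölder continuous Jacobian J₂, let μ₁ be a σ-invariant Borel probability, and let ξ: Ω → ℝ be Hölder continuous. Suppose that for θ in a neighborhood of 0 there are continuous functions φ_θ: Ω → (0,∞) and scalars λ_θ > 0, with φ₀ ≡ 1, λ₀ = 1, such that L_{log J₂ + θξ}(φ_θ) = λ_θ·φ_θ for each θ, and such that θ ↦ φ_θ is differentiable at 0 in the supremum norm and θ ↦ λ_θ is differentiable at 0. Define the normalized potentials log J^θ := log J₂ + θξ + log φ_θ − log(φ_θ∘σ) − log λ_θ. Then the derivative of λ satisfies (d/dθ)|_{θ=0} λ_θ = ∫ ξ dμ₂, and the map θ ↦ −∫ log J^θ dμ₁ is differentiable at θ = 0 with derivative −∫ ξ dμ₁ + ∫ ξ dμ₂; in particular, if μ₁ is suitable with continuous IRN J₁, then (d/dθ)|_{θ=0} D_KL(μ₁, μ^θ) = −∫ ξ dμ₁ + ∫ ξ dμ₂, where μ^θ is the σ-invariant probability with Jacobian J^θ and D_KL(μ₁, μ^θ) = ∫ (log J₁ − log J^θ) dμ₁. -/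

import Mathlib

open MeasureTheory

/-- The one-sided shift space `Ω = {1,…,d}^ℕ` on `d` symbols,
with the product topology and product σ-algebra. -/
abbrev Omega (d : ℕ) : Type := ℕ → Fin d

/-- The left shift `σ(x₁,x₂,x₃,…) = (x₂,x₃,…)`. -/
def shift {d : ℕ} (x : Omega d) : Omega d := fun n => x (n + 1)

/-- Prepend a symbol: `cons a x = ax = (a,x₁,x₂,…)`. -/
def cons {d : ℕ} (a : Fin d) (x : Omega d) : Omega d := fun n =>
  match n with
  | 0 => a
  | Nat.succ k => x k

/-- Hölder continuity with respect to the metric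
`d(x,y) = 2^{-min{ j : x_j ≠ y_j}}` on `Ω`: there are `C` and `α > 0` such that
whenever `x` and `y` agree on their first `n` coordinates (so `d(x,y) ≤ 2⁻ⁿ`),
`|f x - f y| ≤ C * (2⁻ⁿ)^α`. -/
def IsHolder {d : ℕ} (f : Omega d → ℝ) : Prop :=
  Continuous f ∧ ∃ C α : ℝ, 0 < α ∧ ∀ (x y : Omega d) (n : ℕ),
    (∀ k < n, x k = y k) → |f x - f y| ≤ C * ((2 : ℝ)⁻¹ ^ n) ^ α

/-- `μ` is a suitable probability with IRN (inverse Radon–Nikodym derivative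
along injective branches) `J`: the function `J` is continuous and strictly
positive, and for every symbol `j` and continuous `φ`,
`∫ φ(jx) J(jx) dμ(x) = ∫_{[j]} φ dμ` where `[j] = {x | x₁ = j}`. -/
structure IsSuitable {d : ℕ} (μ : Measure (Omega d)) (J : Omega d → ℝ) : Prop where
  cont : Continuous J
  pos : ∀ x, 0 < J x
  irn : ∀ (j : Fin d) (φ : Omega d → ℝ), Continuous φ →
    ∫ x, φ (cons j x) * J (cons j x) ∂μ = ∫ x in {x : Omega d | x 0 = j}, φ x ∂μ

/-- `J` is a Jacobian: continuous, strictly positive, and `Σ_a J(ax) = 1`. -/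
def IsJacobian {d : ℕ} (J : Omega d → ℝ) : Prop :=
  Continuous J ∧ (∀ x, 0 < J x) ∧ ∀ x : Omega d, ∑ a : Fin d, J (cons a x) = 1

/-- `ν = L*_{log J}(μ)`, the image of `μ` under the dual of the Ruelle operator
of the potential `log J` (note `e^{log J(ax)} = J(ax)`): for every continuous
`φ`, `∫ φ dν = ∫ L_{log J}φ dμ = ∫ Σ_a J(ax) φ(ax) dμ(x)`. -/
def IsDualRuelle {d : ℕ} (J : Omega d → ℝ) (μ ν : Measure (Omega d)) : Prop :=
  ∀ φ : Omega d → ℝ, Continuous φ →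
    ∫ x, φ x ∂ν = ∫ x, ∑ a : Fin d, J (cons a x) * φ (cons a x) ∂μ

/-- `μ` is σ-invariant: `∫ φ∘σ dμ = ∫ φ dμ` for all continuous `φ`. -/
def IsShiftInvariant {d : ℕ} (μ : Measure (Omega d)) : Prop :=
  ∀ φ : Omega d → ℝ, Continuous φ → ∫ x, φ (shift x) ∂μ = ∫ x, φ x ∂μ

/-- KL divergence `D_KL(μ₁,μ₂) = ∫ (log J₁ − log J₂) dμ₁` of suitable
probabilities, expressed via their IRNs `J₁`, `J₂`. -/
noncomputable def Dkl {d : ℕ} (μ₁ : Measure (Omega d)) (J₁ J₂ : Omega d → ℝ) : ℝ :=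
  ∫ x, (Real.log (J₁ x) - Real.log (J₂ x)) ∂μ₁

/-! Differentiating the eigen-equation `L_{log J₂ + θξ} φ_θ = λ_θ φ_θ` at `θ = 0` gives pointwise
`L_{log J₂}(ξ + φ') = λ'(0) + φ'`, where `φ'` is the derivative of `θ ↦ φ_θ`; integrating against
`μ₂ = L*_{log J₂} μ₂` cancels `∫ φ'` and leaves `λ'(0) = ∫ ξ dμ₂`. Against the shift-invariant `μ₁`
the coboundary `log φ_θ − log φ_θ ∘ σ` integrates to zero, so near `0` one has
`∫ log J^θ dμ₁ = ∫ log J₂ dμ₁ + θ ∫ ξ dμ₁ − log λ_θ`, whose derivative at `0` is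
`∫ ξ dμ₁ − λ'(0)`. -/

open Filter Topology Real

theorem Continuous.integrable_of_compactSpace {X E : Type*} [TopologicalSpace X] [CompactSpace X]
    [MeasurableSpace X] [OpensMeasurableSpace X] [NormedAddCommGroup E] {μ : Measure X}
    [IsFiniteMeasure μ] {f : X → E} (hf : Continuous f) : Integrable f μ :=
  hf.integrable_of_hasCompactSupport (.of_compactSpace f)

theorem sum_mul_add_eq_of_eventually_sum_exp_mul_eq {ι : Type*} [Fintype ι]
    {w s u' : ι → ℝ} {u : ι → ℝ → ℝ} {v lam : ℝ → ℝ} {v' l' : ℝ} (hw : ∀ i, 0 < w i)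
    (hu : ∀ i, HasDerivAt (u i) (u' i) 0) (hu0 : ∀ i, u i 0 = 1)
    (hv : HasDerivAt v v' 0) (hv0 : v 0 = 1) (hlam : HasDerivAt lam l' 0) (hlam0 : lam 0 = 1)
    (heq : ∀ᶠ θ in 𝓝 0, ∑ i, exp (log (w i) + θ * s i) * u i θ = lam θ * v θ) :
    ∑ i, w i * (s i + u' i) = l' + v' := by
  have hexp : ∀ i, HasDerivAt (fun θ => exp (log (w i) + θ * s i)) (w i * s i) 0 := fun i => by
    simpa [exp_log (hw i)] using (((hasDerivAt_id 0).mul_const (s i)).const_add (log (w i))).exp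
  have hsum : HasDerivAt (fun θ => ∑ i, exp (log (w i) + θ * s i) * u i θ)
      (∑ i, w i * (s i + u' i)) 0 := by
    refine (HasDerivAt.fun_sum fun i _ => (hexp i).fun_mul (hu i)).congr_deriv ?_
    simp [hu0, exp_log (hw _), mul_add]
  have hprod : HasDerivAt (fun θ => lam θ * v θ) (l' + v') 0 := by
    simpa [hlam0, hv0] using hlam.fun_mul hv
  exact (hsum.congr_of_eventuallyEq (heq.mono fun _ h => h.symm)).unique hprod

section ShiftSpace

variable {d : ℕ}

theorem continuous_shift : Continuous (shift (d := d)) :=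
  continuous_pi fun n => continuous_apply (n + 1)

theorem eq_integral_of_sum_mul_add_eq {J ξ ψ : Omega d → ℝ} {μ : Measure (Omega d)}
    [IsProbabilityMeasure μ] {c : ℝ} (hfix : IsDualRuelle J μ μ) (hξ : Continuous ξ)
    (hψ : Continuous ψ)
    (h : ∀ x, ∑ a, J (cons a x) * (ξ (cons a x) + ψ (cons a x)) = c + ψ x) :
    c = ∫ x, ξ x ∂μ := by
  have hint := hfix _ (hξ.fun_add hψ)
  simp only [h] at hint
  rw [integral_add hξ.integrable_of_compactSpace hψ.integrable_of_compactSpace,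
    integral_add (integrable_const c) hψ.integrable_of_compactSpace, integral_const,
    probReal_univ, one_smul] at hint
  linarith

theorem integral_add_sub_comp_shift {μ : Measure (Omega d)} [IsProbabilityMeasure μ]
    (hinv : IsShiftInvariant μ) {g h : Omega d → ℝ} (hg : Continuous g) (hh : Continuous h) :
    ∫ z, (g z + h z - h (shift z)) ∂μ = ∫ z, g z ∂μ := by
  rw [integral_sub (hg.fun_add hh).integrable_of_compactSpace
      (hh.comp' continuous_shift).integrable_of_compactSpace,
    integral_add hg.integrable_of_compactSpace hh.integrable_of_compactSpace, hinv h hh,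
    add_sub_cancel_right]

noncomputable def normalizedLogJacobian (J ξ : Omega d → ℝ) (Φ : ℝ → C(Omega d, ℝ))
    (lam : ℝ → ℝ) (θ : ℝ) (z : Omega d) : ℝ :=
  log (J z) + θ * ξ z + log (Φ θ z) - log (Φ θ (shift z)) - log (lam θ)

variable {J ξ : Omega d → ℝ} {Φ : ℝ → C(Omega d, ℝ)} {lam : ℝ → ℝ}

theorem continuous_normalizedLogJacobian (hJ : Continuous J) (hJpos : ∀ z, 0 < J z)
    (hξ : Continuous ξ) {θ : ℝ} (hΦ : ∀ z, 0 < Φ θ z) :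
    Continuous (normalizedLogJacobian J ξ Φ lam θ) := by
  have hlogΦ : Continuous fun z => log (Φ θ z) := (Φ θ).continuous.log fun z => (hΦ z).ne'
  exact ((((hJ.log fun z => (hJpos z).ne').add (continuous_const.mul hξ)).add hlogΦ).sub
    (hlogΦ.comp' continuous_shift)).sub continuous_const

theorem integral_normalizedLogJacobian {μ : Measure (Omega d)} [IsProbabilityMeasure μ]
    (hinv : IsShiftInvariant μ) (hJ : Continuous J) (hJpos : ∀ z, 0 < J z) (hξ : Continuous ξ)
    {θ : ℝ} (hΦ : ∀ z, 0 < Φ θ z) :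
    ∫ z, normalizedLogJacobian J ξ Φ lam θ z ∂μ
      = ∫ z, log (J z) ∂μ + θ * ∫ z, ξ z ∂μ - log (lam θ) := by
  have hlogJ : Continuous fun z => log (J z) := hJ.log fun z => (hJpos z).ne'
  have hlogΦ : Continuous fun z => log (Φ θ z) := (Φ θ).continuous.log fun z => (hΦ z).ne'
  unfold normalizedLogJacobian
  rw [integral_sub (((hlogJ.fun_add (continuous_const.fun_mul hξ)).fun_add hlogΦ).fun_sub
      (hlogΦ.comp' continuous_shift)).integrable_of_compactSpace (integrable_const _),
    integral_add_sub_comp_shift hinv (hlogJ.fun_add (continuous_const.fun_mul hξ)) hlogΦ,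
    integral_add hlogJ.integrable_of_compactSpace
      (continuous_const.fun_mul hξ).integrable_of_compactSpace,
    integral_const_mul, integral_const, probReal_univ, one_smul]

theorem hasDerivAt_neg_integral_normalizedLogJacobian {μ : Measure (Omega d)}
    [IsProbabilityMeasure μ] (hinv : IsShiftInvariant μ) (hJ : Continuous J)
    (hJpos : ∀ z, 0 < J z) (hξ : Continuous ξ) (hΦ : ∀ᶠ θ in 𝓝 0, ∀ z, 0 < Φ θ z)
    {l' : ℝ} (hlam : HasDerivAt lam l' 0) (hlam0 : lam 0 = 1) :
    HasDerivAt (fun θ => -∫ z, normalizedLogJacobian J ξ Φ lam θ z ∂μ)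
      (-∫ z, ξ z ∂μ + l') 0 := by
  have hloglam : HasDerivAt (fun θ => log (lam θ)) l' 0 := by
    simpa [hlam0] using hlam.log (by simp [hlam0])
  have hexplicit : HasDerivAt
      (fun θ => -(∫ z, log (J z) ∂μ + θ * ∫ z, ξ z ∂μ - log (lam θ))) (-∫ z, ξ z ∂μ + l') 0 := by
    simpa [neg_sub', sub_eq_neg_add] using ((((hasDerivAt_id' (0 : ℝ)).mul_const
      (∫ z, ξ z ∂μ)).const_add (∫ z, log (J z) ∂μ)).fun_sub hloglam).fun_neg
  refine hexplicit.congr_of_eventuallyEq ?_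
  filter_upwards [hΦ] with θ hθ
  rw [integral_normalizedLogJacobian hinv hJ hJpos hξ hθ]

end ShiftSpace

theorem deriv_of_kl_divergence_general
    (d : ℕ) (J₂ J₁ ξ : Omega d → ℝ)
    (μ₂ μ₁ : Measure (Omega d))
    [IsProbabilityMeasure μ₂] [IsProbabilityMeasure μ₁]
    (hJ₂ : IsJacobian J₂)
    (hfix : IsDualRuelle J₂ μ₂ μ₂)
    (hinv₁ : IsShiftInvariant μ₁)
    (h₁ : IsSuitable μ₁ J₁)
    (hξ : IsHolder ξ)
    (Φ : ℝ → C(Omega d, ℝ)) (lam : ℝ → ℝ) (ε : ℝ) (hε : 0 < ε)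
    (hΦpos : ∀ θ, |θ| < ε → ∀ x, 0 < Φ θ x)
    (heigen : ∀ θ, |θ| < ε → ∀ x : Omega d,
      ∑ a : Fin d, Real.exp (Real.log (J₂ (cons a x)) + θ * ξ (cons a x)) * Φ θ (cons a x)
        = lam θ * Φ θ x)
    (hΦ0 : Φ 0 = 1) (hlam0 : lam 0 = 1)
    (hΦdiff : DifferentiableAt ℝ Φ 0) (hlamdiff : DifferentiableAt ℝ lam 0) :
    deriv lam 0 = ∫ x, ξ x ∂μ₂ ∧
    HasDerivAt
      (fun θ => - ∫ z, (Real.log (J₂ z) + θ * ξ z + Real.log (Φ θ z)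
        - Real.log (Φ θ (shift z)) - Real.log (lam θ)) ∂μ₁)
      (- ∫ x, ξ x ∂μ₁ + ∫ x, ξ x ∂μ₂) 0 ∧
    HasDerivAt
      (fun θ => ∫ z, (Real.log (J₁ z) - (Real.log (J₂ z) + θ * ξ z + Real.log (Φ θ z)
        - Real.log (Φ θ (shift z)) - Real.log (lam θ))) ∂μ₁)
      (- ∫ x, ξ x ∂μ₁ + ∫ x, ξ x ∂μ₂) 0 := by
  have hnear : ∀ᶠ θ in 𝓝 (0 : ℝ), |θ| < ε := by simpa using eventually_abs_sub_lt (0 : ℝ) hε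
  have hΦnear : ∀ᶠ θ in 𝓝 (0 : ℝ), ∀ x, 0 < Φ θ x := hnear.mono hΦpos
  have hΦx : ∀ x, HasDerivAt (fun θ => Φ θ x) (deriv Φ 0 x) 0 := fun x =>
    (ContinuousMap.evalCLM ℝ (M := ℝ) x).hasFDerivAt.comp_hasDerivAt 0 hΦdiff.hasDerivAt
  have hΦ0x : ∀ x, Φ 0 x = 1 := fun x => by simp [hΦ0]
  have hlam' : deriv lam 0 = ∫ x, ξ x ∂μ₂ :=
    eq_integral_of_sum_mul_add_eq hfix hξ.1 (deriv Φ 0).continuous fun x =>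
      sum_mul_add_eq_of_eventually_sum_exp_mul_eq (fun a => hJ₂.2.1 (cons a x))
        (fun a => hΦx (cons a x)) (fun a => hΦ0x (cons a x)) (hΦx x) (hΦ0x x)
        hlamdiff.hasDerivAt hlam0 (hnear.mono fun θ hθ => heigen θ hθ x)
  have hpot := hasDerivAt_neg_integral_normalizedLogJacobian hinv₁ hJ₂.1 hJ₂.2.1 hξ.1 hΦnear
    hlamdiff.hasDerivAt hlam0
  rw [hlam'] at hpot
  refine ⟨hlam', hpot, ?_⟩
  show HasDerivAt (fun θ => ∫ z, (log (J₁ z) - normalizedLogJacobian J₂ ξ Φ lam θ z) ∂μ₁) _ 0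
  refine (hpot.const_add (∫ z, log (J₁ z) ∂μ₁)).congr_of_eventuallyEq ?_
  filter_upwards [hΦnear] with θ hθ
  rw [integral_sub (h₁.cont.log fun z => (h₁.pos z).ne').integrable_of_compactSpace
    (continuous_normalizedLogJacobian hJ₂.1 hJ₂.2.1 hξ.1 hθ).integrable_of_compactSpace,
    sub_eq_add_neg]

/-- infinitesimal variation of KL divergence: let `μ₂` be the
suitable σ-invariant probability with Hölder Jacobian `J₂` (so
`L*_{log J₂}μ₂ = μ₂`), `μ₁` a σ-invariant probability, and `ξ` Hölder. Suppose
for `|θ| < ε` there are continuous `φ_θ > 0` and `λ_θ > 0` with `φ₀ ≡ 1`,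
`λ₀ = 1`, `L_{log J₂ + θξ}(φ_θ) = λ_θ·φ_θ`, with `θ ↦ φ_θ` differentiable at
`0` in supremum norm (as a curve in `C(Ω,ℝ)`) and `θ ↦ λ_θ` differentiable at
`0`. With the normalized potentials
`log J^θ = log J₂ + θξ + log φ_θ − log(φ_θ∘σ) − log λ_θ`, one has
`(d/dθ)|₀ λ_θ = ∫ ξ dμ₂`, and `θ ↦ −∫ log J^θ dμ₁` is differentiable at `0`
with derivative `−∫ ξ dμ₁ + ∫ ξ dμ₂`; in particular, if `μ₁` is suitable with
continuous IRN `J₁`, then `(d/dθ)|₀ D_KL(μ₁,μ^θ) = −∫ ξ dμ₁ + ∫ ξ dμ₂`. -/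
theorem deriv_of_kl_divergence
    (d : ℕ) (hd : 2 ≤ d) (J₂ J₁ ξ : Omega d → ℝ)
    (μ₂ μ₁ : Measure (Omega d))
    [IsProbabilityMeasure μ₂] [IsProbabilityMeasure μ₁]
    (hJ₂ : IsJacobian J₂) (hJ₂H : IsHolder J₂)
    (h₂ : IsSuitable μ₂ J₂) (hinv₂ : IsShiftInvariant μ₂)
    (hfix : IsDualRuelle J₂ μ₂ μ₂)
    (hinv₁ : IsShiftInvariant μ₁)
    (h₁ : IsSuitable μ₁ J₁)
    (hξ : IsHolder ξ)
    (Φ : ℝ → C(Omega d, ℝ)) (lam : ℝ → ℝ) (ε : ℝ) (hε : 0 < ε)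
    (hΦpos : ∀ θ, |θ| < ε → ∀ x, 0 < Φ θ x)
    (hlampos : ∀ θ, |θ| < ε → 0 < lam θ)
    (heigen : ∀ θ, |θ| < ε → ∀ x : Omega d,
      ∑ a : Fin d, Real.exp (Real.log (J₂ (cons a x)) + θ * ξ (cons a x)) * Φ θ (cons a x)
        = lam θ * Φ θ x)
    (hΦ0 : Φ 0 = 1) (hlam0 : lam 0 = 1)
    (hΦdiff : DifferentiableAt ℝ Φ 0) (hlamdiff : DifferentiableAt ℝ lam 0) :
    deriv lam 0 = ∫ x, ξ x ∂μ₂ ∧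
    HasDerivAt
      (fun θ => - ∫ z, (Real.log (J₂ z) + θ * ξ z + Real.log (Φ θ z)
        - Real.log (Φ θ (shift z)) - Real.log (lam θ)) ∂μ₁)
      (- ∫ x, ξ x ∂μ₁ + ∫ x, ξ x ∂μ₂) 0 ∧
    HasDerivAt
      (fun θ => ∫ z, (Real.log (J₁ z) - (Real.log (J₂ z) + θ * ξ z + Real.log (Φ θ z)
        - Real.log (Φ θ (shift z)) - Real.log (lam θ))) ∂μ₁)
      (- ∫ x, ξ x ∂μ₁ + ∫ x, ξ x ∂μ₂) 0 :=
  deriv_of_kl_divergence_general d J₂ J₁ ξ μ₂ μ₁ hJ₂ hfix hinv₁ h₁ hξ Φ lam ε hε hΦpos heigen hΦ0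
    hlam0 hΦdiff hlamdiff
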